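/- arXiv:2302.00845 — 3 statements merged into one kernel-verified Lean document; each statement's English description precedes it below -/
import Mathlib

section
/- Let z_1, …, z_N be vectors in ℝ^d with mean z̄ = (1/N)·Σ_j z_j, let π be a permutation of [N], and let s_1, …, s_N ∈ {+1, -1}. Define π' as the permutation obtained by listing, in order, the indices π(j) with s_{π(j)} = +1 followed by the indices π(j) with s_{π(j)} = -1 in reverse order. Then max_{k ∈ [N]} ‖Σ_{j=1}^k (z_{π'(j)} - z̄)‖_∞ ≤ (1/2)·max_{k ∈ [N]} ‖Σ_{j=1}^k s_{π(j)}(z_{π(j)} - z̄)‖_∞ + (1/2)·max_{k ∈ [N]} ‖Σ_{j=1}^k (z_{π(j)} - z̄)‖_∞. -/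
/-!
Write `f i = z i - z̄` and `g i = s i • f i`. On a positive index `f + g = 2 f`, on a negative
one `f + g = 0`; hence twice any prefix sum of `f` over the positive subsequence equals
`S_g(m) + S_f(m)`, where `S_h(m)` is the sum of `h` over the first `m` indices of the original
order, so it is bounded by `A + B`. Since the `f`-values sum to
zero, a prefix of the new order that reaches into the reversed negatives sums to minus a prefix
sum of the negative subsequence, to which the same argument applies with `-g` in place of `g`.
-/

section Reordering

variable {α E : Type*}

theorem exists_two_nsmul_sum_take_filter [AddCommGroup E] (f g : α → E) (p : α → Bool)
    (hpos : ∀ a, p a = true → g a = f a) (hneg : ∀ a, p a = false → g a = -f a)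
    (L : List α) (k : ℕ) :
    ∃ m ≤ L.length, 2 • (((L.filter p).take k).map f).sum
      = ((L.take m).map g).sum + ((L.take m).map f).sum := by
  induction L generalizing k with
  | nil => exact ⟨0, le_rfl, by simp⟩
  | cons a L ih =>
    cases k with
    | zero => exact ⟨0, Nat.zero_le _, by simp⟩
    | succ k =>
      cases ha : p a
      · obtain ⟨m, hm, h⟩ := ih (k + 1)
        refine ⟨m + 1, by simpa using hm, ?_⟩
        simp only [List.filter_cons, ha, Bool.false_eq_true, if_false, List.take_succ_cons,
          List.map_cons, List.sum_cons, hneg a ha, h]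
        abel
      · obtain ⟨m, hm, h⟩ := ih k
        refine ⟨m + 1, by simpa using hm, ?_⟩
        simp only [List.filter_cons, ha, if_true, List.take_succ_cons, List.map_cons,
          List.sum_cons, hpos a ha, nsmul_add, h]
        abel

theorem sum_take_append_reverse_of_sum_eq_zero [AddCommGroup E] (f : α → E) (l₁ l₂ : List α)
    (hsum : (l₁.map f).sum + (l₂.map f).sum = 0) {k : ℕ} (hk : l₁.length ≤ k) :
    (((l₁ ++ l₂.reverse).take k).map f).sum
      = -((l₂.take (l₁.length + l₂.length - k)).map f).sum := by
  have hdrop := List.sum_take_add_sum_drop (l₂.map f) (l₁.length + l₂.length - k)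
  rw [List.take_append, List.take_of_length_le hk, List.take_reverse,
    show l₂.length - (k - l₁.length) = l₁.length + l₂.length - k by omega]
  simp only [List.map_append, List.map_reverse, List.sum_append, List.sum_reverse,
    ← List.map_take, ← List.map_drop] at hdrop ⊢
  rw [eq_neg_iff_add_eq_zero, ← hsum, ← hdrop]
  abel

theorem exists_norm_two_nsmul_sum_take_filter_append_reverse_le [SeminormedAddCommGroup E]
    (f g : α → E) (p : α → Bool)
    (hpos : ∀ a, p a = true → g a = f a) (hneg : ∀ a, p a = false → g a = -f a)
    (L : List α) (hL : (L.map f).sum = 0) (k : ℕ) :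
    ∃ m ≤ L.length, ‖2 • ((((L.filter p) ++ (L.filter (fun a => !p a)).reverse).take k).map f).sum‖
      ≤ ‖((L.take m).map g).sum‖ + ‖((L.take m).map f).sum‖ := by
  by_cases hk : k ≤ (L.filter p).length
  · obtain ⟨m, hm, h⟩ := exists_two_nsmul_sum_take_filter f g p hpos hneg L k
    refine ⟨m, hm, ?_⟩
    rw [List.take_append, Nat.sub_eq_zero_of_le hk, List.take_zero, List.append_nil, h]
    exact norm_add_le _ _
  · have hsplit : ((L.filter p).map f).sum + ((L.filter (fun a => !p a)).map f).sum = 0 := by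
      rw [← List.sum_append, ← List.map_append, ((L.filter_append_perm p).map f).sum_eq, hL]
    obtain ⟨m, hm, h⟩ := exists_two_nsmul_sum_take_filter f (fun a => -g a) (fun a => !p a)
      (fun a ha => by simp [hneg a (by simpa using ha)])
      (fun a ha => by rw [hpos a (by simpa using ha)]) L
      ((L.filter p).length + (L.filter (fun a => !p a)).length - k)
    have hsum_neg : ((L.take m).map fun a => -g a).sum = -((L.take m).map g).sum := by
      rw [List.sum_neg, List.map_map]
      rfl
    refine ⟨m, hm, ?_⟩
    rw [sum_take_append_reverse_of_sum_eq_zero f _ _ hsplit (by omega), smul_neg, h, norm_neg,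
      hsum_neg, ← norm_neg, neg_add, neg_neg, ← sub_eq_add_neg]
    exact norm_sub_le _ _

end Reordering

theorem sum_sub_inv_natCast_smul_sum_eq_zero {ι 𝕜 E : Type*} [Fintype ι] [DivisionRing 𝕜]
    [CharZero 𝕜] [AddCommGroup E] [Module 𝕜 E] (z : ι → E) :
    ∑ i, (z i - ((Fintype.card ι : ℕ) : 𝕜)⁻¹ • ∑ j, z j) = 0 := by
  rcases isEmpty_or_nonempty ι with _ | _
  · simp
  rw [Finset.sum_sub_distrib, Finset.sum_const, Finset.card_univ, ← Nat.cast_smul_eq_nsmul 𝕜,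
    smul_smul, mul_inv_cancel₀ (Nat.cast_ne_zero.mpr Fintype.card_ne_zero), one_smul, sub_self]

theorem stmt2 {N d : ℕ} (z : Fin N → (Fin d → ℝ)) (s : Fin N → ℝ)
    (hs : ∀ j, s j = 1 ∨ s j = -1) (π : Equiv.Perm (Fin N))
    (zbar : Fin d → ℝ) (hzbar : zbar = (N : ℝ)⁻¹ • ∑ j, z j)
    (A B : ℝ)
    (hA : ∀ k ≤ N,
      ‖(((((List.finRange N).map π).take k).map (fun i => s i • (z i - zbar))).sum)‖ ≤ A)
    (hB : ∀ k ≤ N,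
      ‖(((((List.finRange N).map π).take k).map (fun i => z i - zbar)).sum)‖ ≤ B) :
    ∀ k ≤ N,
      ‖((((((List.finRange N).map π).filter (fun i => decide (s i = 1)))
          ++ ((((List.finRange N).map π).filter (fun i => decide (s i = -1))).reverse)).take k).map
          (fun i => z i - zbar)).sum‖ ≤ (1/2) * A + (1/2) * B := by
  intro k _
  set L := (List.finRange N).map π
  have hneg_filter :
      L.filter (fun i => decide (s i = -1)) = L.filter (fun i => !decide (s i = 1)) :=
    List.filter_congr fun i _ => by rcases hs i with h | h <;> norm_num [h]
  have hL : (L.map fun i => z i - zbar).sum = 0 := by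
    rw [List.map_map, ← Fin.sum_univ_def]
    refine (Equiv.sum_comp π (fun i => z i - zbar)).trans ?_
    simpa [hzbar] using sum_sub_inv_natCast_smul_sum_eq_zero (𝕜 := ℝ) z
  obtain ⟨m, hm, h⟩ := exists_norm_two_nsmul_sum_take_filter_append_reverse_le
    (fun i => z i - zbar) (fun i => s i • (z i - zbar)) (fun i => decide (s i = 1))
    (fun i hi => by rw [of_decide_eq_true hi, one_smul])
    (fun i hi => by rw [(hs i).resolve_left (of_decide_eq_false hi), neg_one_smul])
    L hL k
  have hmN : m ≤ N := by simpa [L] using hm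
  rw [← hneg_filter, RCLike.norm_nsmul ℝ, nsmul_eq_mul, Nat.cast_ofNat] at h
  linarith [hA m hmN, hB m hmN]
end

section
/- Let m, n ∈ ℕ with n even, and let z_{i,j} ∈ ℝ^d for i ∈ [m], j ∈ [n]. Suppose ‖Σ_{i=1}^m Σ_{j=1}^n z_{i,j}‖_∞ ≤ c₁, and suppose the pair differences y_{i,k} = z_{i,2k-1} - z_{i,2k} together with signs s_{i,k} ∈ {±1} satisfy, for every prefix P of the flattened sequence (ordered by k then i), ‖Σ over the first P pairs of s_{i,k}·y_{i,k}‖_∞ ≤ A for some A ≥ 0. Define per-worker permutations π'_i by listing the elements receiving sign +1 in order, followed by the elements receiving sign -1 in reverse order. Then max_{l ∈ [n]} ‖Σ_{i=1}^m Σ_{j=1}^l z_{i,π'_i(j)}‖_∞ ≤ (1/2)·max_{l ∈ [n]} ‖Σ_{i=1}^m Σ_{j=1}^l z_{i,j}‖_∞ + c₁ + A. -/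
/-!
Let `a_k = z (2k-1) + z (2k)` and `y_k = z (2k-1) - z (2k)` be the sum and difference of
pair `k`. The element of pair `k` placed in the first half is
`½ (a_k + s_k y_k)`, its partner (placed in the second half, in reverse pair order) is
`½ (a_k - s_k y_k)`. Hence a prefix of length `l ≤ n/2` of the reordered sequence equals half
of the original prefix of length `2l` plus half of a signed pair prefix, and a longer prefix is the
total sum minus a suffix of the same shape with the sign flipped. Summing over the workers and
taking norms gives `B/2 + A/2`, resp. `c₁ + B/2 + A/2`.
-/

open Finset

section IntervalSums

variable {M : Type*} [AddCommMonoid M]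

theorem sum_Icc_one_eq_sum_range (m : ℕ) (f : ℕ → M) :
    ∑ i ∈ Icc 1 m, f i = ∑ i ∈ range m, f (i + 1) := by
  rw [range_eq_Ico, sum_Ico_add' f 0 m 1, zero_add, Ico_add_one_right_eq_Icc]

theorem sum_range_mul_eq_sum_Icc_sum_Icc (m l : ℕ) (f : ℕ → ℕ → M) :
    ∑ q ∈ range (m * l), f (q % m + 1) (q / m + 1) = ∑ k ∈ Icc 1 l, ∑ i ∈ Icc 1 m, f i k := by
  rcases Nat.eq_zero_or_pos m with rfl | hm
  · simp
  induction l with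
  | zero => simp
  | succ l ih =>
    rw [Nat.mul_succ, sum_range_add, ih, sum_Icc_succ_top (by omega), sum_Icc_one_eq_sum_range m]
    congr 1
    refine sum_congr rfl fun i hi => ?_
    have hi : i < m := mem_range.1 hi
    rw [Nat.mul_add_mod, Nat.mod_eq_of_lt hi, Nat.mul_add_div hm, Nat.div_eq_of_lt hi, add_zero]

theorem sum_Icc_two_mul (g : ℕ → M) (t : ℕ) :
    ∑ j ∈ Icc 1 (2 * t), g j = ∑ k ∈ Icc 1 t, (g (2 * k - 1) + g (2 * k)) := by
  induction t with
  | zero => simp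
  | succ t ih =>
    rw [sum_Icc_succ_top (by omega), ← ih, show 2 * (t + 1) = 2 * t + 1 + 1 by ring,
      sum_Icc_succ_top (by omega), sum_Icc_succ_top (by omega), add_assoc, Nat.add_sub_cancel]

theorem sum_Icc_add_sum_Ioc (g : ℕ → M) {l n : ℕ} (h : l ≤ n) :
    ∑ j ∈ Icc 1 l, g j + ∑ j ∈ Ioc l n, g j = ∑ j ∈ Icc 1 n, g j := by
  have hIcc : ∀ k, Icc 1 k = Ioc 0 k := Icc_add_one_left_eq_Ioc 0
  rw [hIcc, hIcc, sum_Ioc_consecutive g (Nat.zero_le l) h]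

theorem sum_Ioc_eq_sum_Icc_reflect (g : ℕ → M) (a n : ℕ) :
    ∑ j ∈ Ioc a n, g j = ∑ k ∈ Icc 1 (n - a), g (n + 1 - k) := by
  refine sum_nbij' (fun j => n + 1 - j) (fun k => n + 1 - k) ?_ ?_ ?_ ?_ ?_ <;>
    intro x hx <;> simp only [mem_Ioc, mem_Icc] at hx ⊢
  all_goals first | omega | congr 1; omega

end IntervalSums

theorem ite_eq_inv_two_smul_add_smul_sub {E : Type*} [AddCommGroup E] [Module ℝ E] {σ : ℝ}
    (hσ : σ = 1 ∨ σ = -1) (a b : E) :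
    (if σ = 1 then a else b) = (2 : ℝ)⁻¹ • (a + b + σ • (a - b)) := by
  rcases hσ with rfl | rfl
  · rw [if_pos rfl]; module
  · rw [if_neg (by norm_num)]; module

theorem norm_inv_two_smul_le {E : Type*} [SeminormedAddCommGroup E] [NormedSpace ℝ E] {v : E}
    {C : ℝ} (h : ‖v‖ ≤ C) : ‖(2 : ℝ)⁻¹ • v‖ ≤ C / 2 := by
  rw [norm_smul, norm_inv, Real.norm_two]
  linarith

/-- The per-worker permutation `π'_i` for signs `σ = s i`: position `j ≤ n/2` holds the element of
pair `j` that `σ j • (x (2j-1) - x (2j))` counts with sign `+1`; the partners follow in reverse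
pair order. -/
noncomputable def pairBalancedOrder (n : ℕ) (σ : ℕ → ℝ) (j : ℕ) : ℕ :=
  if j ≤ n / 2 then (if σ j = 1 then 2 * j - 1 else 2 * j)
  else (if σ (n + 1 - j) = 1 then 2 * (n + 1 - j) else 2 * (n + 1 - j) - 1)

section PairBalancedOrder

variable {E : Type*} [AddCommGroup E] [Module ℝ E] {n : ℕ} {σ : ℕ → ℝ} (x : ℕ → E)

theorem apply_pairBalancedOrder_of_le {j : ℕ} (hσ : σ j = 1 ∨ σ j = -1) (hj : j ≤ n / 2) :
    x (pairBalancedOrder n σ j) =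
      (2 : ℝ)⁻¹ • (x (2 * j - 1) + x (2 * j) + σ j • (x (2 * j - 1) - x (2 * j))) := by
  rw [pairBalancedOrder, if_pos hj, apply_ite x, ite_eq_inv_two_smul_add_smul_sub hσ]

theorem apply_pairBalancedOrder_sub_of_le {k : ℕ} (hσ : σ k = 1 ∨ σ k = -1) (hk : k ≤ n / 2) :
    x (pairBalancedOrder n σ (n + 1 - k)) =
      (2 : ℝ)⁻¹ • (x (2 * k - 1) + x (2 * k) - σ k • (x (2 * k - 1) - x (2 * k))) := by
  rw [pairBalancedOrder, if_neg (by omega), Nat.sub_sub_self (by omega), apply_ite x,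
    ite_eq_inv_two_smul_add_smul_sub hσ]
  module

theorem sum_pairBalancedOrder_head (hσ : ∀ k, σ k = 1 ∨ σ k = -1) {t : ℕ} (ht : t ≤ n / 2) :
    ∑ j ∈ Icc 1 t, x (pairBalancedOrder n σ j) =
      (2 : ℝ)⁻¹ • (∑ j ∈ Icc 1 (2 * t), x j
        + ∑ k ∈ Icc 1 t, σ k • (x (2 * k - 1) - x (2 * k))) := by
  rw [sum_Icc_two_mul, ← sum_add_distrib, smul_sum]
  exact sum_congr rfl fun j hj => apply_pairBalancedOrder_of_le x (hσ j) ((mem_Icc.1 hj).2.trans ht)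

theorem sum_pairBalancedOrder_tail (hσ : ∀ k, σ k = 1 ∨ σ k = -1) {t : ℕ} (ht : t ≤ n / 2) :
    ∑ k ∈ Icc 1 t, x (pairBalancedOrder n σ (n + 1 - k)) =
      (2 : ℝ)⁻¹ • (∑ j ∈ Icc 1 (2 * t), x j
        - ∑ k ∈ Icc 1 t, σ k • (x (2 * k - 1) - x (2 * k))) := by
  rw [sum_Icc_two_mul, ← sum_sub_distrib, smul_sum]
  exact sum_congr rfl fun k hk =>
    apply_pairBalancedOrder_sub_of_le x (hσ k) ((mem_Icc.1 hk).2.trans ht)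

theorem sum_pairBalancedOrder_of_half_le (hσ : ∀ k, σ k = 1 ∨ σ k = -1) (hn : Even n) {l : ℕ}
    (hl : n / 2 ≤ l) (hln : l ≤ n) :
    ∑ j ∈ Icc 1 l, x (pairBalancedOrder n σ j) =
      ∑ j ∈ Icc 1 n, x j - (2 : ℝ)⁻¹ • (∑ j ∈ Icc 1 (2 * (n - l)), x j
        - ∑ k ∈ Icc 1 (n - l), σ k • (x (2 * k - 1) - x (2 * k))) := by
  obtain ⟨r, rfl⟩ := hn
  have tail : ∀ a, r ≤ a → ∑ j ∈ Ioc a (r + r), x (pairBalancedOrder (r + r) σ j) =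
      (2 : ℝ)⁻¹ • (∑ j ∈ Icc 1 (2 * (r + r - a)), x j
        - ∑ k ∈ Icc 1 (r + r - a), σ k • (x (2 * k - 1) - x (2 * k))) := fun a ha => by
    rw [sum_Ioc_eq_sum_Icc_reflect, sum_pairBalancedOrder_tail x hσ (by omega)]
  have total : ∑ j ∈ Icc 1 (r + r), x (pairBalancedOrder (r + r) σ j) = ∑ j ∈ Icc 1 (r + r), x j := by
    rw [← sum_Icc_add_sum_Ioc _ (by omega : r ≤ r + r), tail r le_rfl,
      sum_pairBalancedOrder_head x hσ (by omega : r ≤ (r + r) / 2), Nat.add_sub_cancel, ← two_mul]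
    module
  rw [← total, ← sum_Icc_add_sum_Ioc _ hln, tail l (by omega), add_sub_cancel_right]

end PairBalancedOrder

theorem stmt4_general {d : ℕ} (m n : ℕ) (heven : Even n)
    (z : ℕ → ℕ → (Fin d → ℝ)) (s : ℕ → ℕ → ℝ)
    (hs : ∀ i k, s i k = 1 ∨ s i k = -1)
    (c₁ A : ℝ)
    (hc₁ : ‖∑ i ∈ Finset.Icc 1 m, ∑ j ∈ Finset.Icc 1 n, z i j‖ ≤ c₁)
    (hsigned : ∀ P ≤ m * (n / 2),
      ‖∑ q ∈ Finset.range P,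
        s (q % m + 1) (q / m + 1) • (z (q % m + 1) (2 * (q / m + 1) - 1)
          - z (q % m + 1) (2 * (q / m + 1)))‖ ≤ A)
    (π' : ℕ → ℕ → ℕ)
    (hπ' : ∀ i ∈ Finset.Icc 1 m, ∀ j ∈ Finset.Icc 1 n,
      π' i j = if j ≤ n / 2
        then (if s i j = 1 then 2 * j - 1 else 2 * j)
        else (if s i (n + 1 - j) = 1 then 2 * (n + 1 - j) else 2 * (n + 1 - j) - 1))
    (B : ℝ)
    (hB : ∀ l ∈ Finset.Icc 1 n,
      ‖∑ i ∈ Finset.Icc 1 m, ∑ j ∈ Finset.Icc 1 l, z i j‖ ≤ B) :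
    ∀ l ∈ Finset.Icc 1 n,
      ‖∑ i ∈ Finset.Icc 1 m, ∑ j ∈ Finset.Icc 1 l, z i (π' i j)‖
        ≤ (1/2) * B + c₁ + A := by
  have hA : 0 ≤ A := by simpa using hsigned 0 (Nat.zero_le _)
  have hc₁0 : 0 ≤ c₁ := (norm_nonneg _).trans hc₁
  have hW : ∀ t ≤ n / 2,
      ‖∑ i ∈ Icc 1 m, ∑ k ∈ Icc 1 t, s i k • (z i (2 * k - 1) - z i (2 * k))‖ ≤ A := by
    intro t ht
    rw [sum_comm, ← sum_range_mul_eq_sum_Icc_sum_Icc m t fun i k =>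
      s i k • (z i (2 * k - 1) - z i (2 * k))]
    exact hsigned _ (Nat.mul_le_mul_left m ht)
  intro l hl
  obtain ⟨-, hln⟩ := mem_Icc.1 hl
  have hS : ∀ p ≤ n, ‖∑ i ∈ Icc 1 m, ∑ j ∈ Icc 1 p, z i j‖ ≤ B := by
    intro p hp
    rcases Nat.eq_zero_or_pos p with rfl | hp0
    · simpa using (norm_nonneg _).trans (hB l hl)
    · exact hB p (mem_Icc.2 ⟨hp0, hp⟩)
  have hπ : ∀ i ∈ Icc 1 m, ∑ j ∈ Icc 1 l, z i (π' i j) =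
      ∑ j ∈ Icc 1 l, z i (pairBalancedOrder n (s i) j) := fun i hi =>
    sum_congr rfl fun j hj => congrArg (z i) (hπ' i hi j (Icc_subset_Icc_right hln hj))
  rw [sum_congr rfl hπ]
  rcases le_total l (n / 2) with hl2 | hl2
  · rw [sum_congr rfl fun i _ => sum_pairBalancedOrder_head (z i) (hs i) hl2, ← smul_sum,
      sum_add_distrib]
    have := norm_inv_two_smul_le (norm_add_le_of_le (hS (2 * l) (by omega)) (hW l hl2))
    linarith
  · rw [sum_congr rfl fun i _ => sum_pairBalancedOrder_of_half_le (z i) (hs i) heven hl2 hln,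
      sum_sub_distrib, ← smul_sum, sum_sub_distrib]
    have hn2 : n % 2 = 0 := Nat.even_iff.1 heven
    have := norm_sub_le_of_le hc₁ (norm_inv_two_smul_le
      (norm_sub_le_of_le (hS (2 * (n - l)) (by omega)) (hW (n - l) (by omega))))
    linarith

theorem stmt4 {d : ℕ} (m n : ℕ) (hm : 0 < m) (hn : 0 < n) (heven : Even n)
    (z : ℕ → ℕ → (Fin d → ℝ)) (s : ℕ → ℕ → ℝ)
    (hs : ∀ i k, s i k = 1 ∨ s i k = -1)
    (c₁ A : ℝ) (hA0 : 0 ≤ A)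
    (hc₁ : ‖∑ i ∈ Finset.Icc 1 m, ∑ j ∈ Finset.Icc 1 n, z i j‖ ≤ c₁)
    (hsigned : ∀ P ≤ m * (n / 2),
      ‖∑ q ∈ Finset.range P,
        s (q % m + 1) (q / m + 1) • (z (q % m + 1) (2 * (q / m + 1) - 1)
          - z (q % m + 1) (2 * (q / m + 1)))‖ ≤ A)
    (π' : ℕ → ℕ → ℕ)
    (hπ' : ∀ i ∈ Finset.Icc 1 m, ∀ j ∈ Finset.Icc 1 n,
      π' i j = if j ≤ n / 2
        then (if s i j = 1 then 2 * j - 1 else 2 * j)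
        else (if s i (n + 1 - j) = 1 then 2 * (n + 1 - j) else 2 * (n + 1 - j) - 1))
    (B : ℝ)
    (hB : ∀ l ∈ Finset.Icc 1 n,
      ‖∑ i ∈ Finset.Icc 1 m, ∑ j ∈ Finset.Icc 1 l, z i j‖ ≤ B) :
    ∀ l ∈ Finset.Icc 1 n,
      ‖∑ i ∈ Finset.Icc 1 m, ∑ j ∈ Finset.Icc 1 l, z i (π' i j)‖
        ≤ (1/2) * B + c₁ + A :=
  stmt4_general m n heven z s hs c₁ A hc₁ hsigned π' hπ' B hB
end

section
/- Let z_1, …, z_N ∈ ℝ^d and s_1, …, s_N ∈ {+1, -1}. Suppose max_{k∈[N]} ‖Σ_{j=1}^k s_j z_j‖_∞ ≤ A and ‖Σ_{j=1}^N z_j‖_∞ ≤ c₁. Let π' be the permutation placing indices j with s_j = +1 first (in increasing order of j) followed by indices with s_j = -1 in decreasing order of j. Then max_{k∈[N]} ‖Σ_{l=1}^k z_{π'(l)}‖_∞ ≤ (1/2)·max_{k∈[N]} ‖Σ_{j=1}^k z_j‖_∞ + (1/2)·A + c₁. -/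
/-!
Since every `s j` is `±1`, the sum of the `z j` over the indices `j < m` with `s j = ε` equals
`(κ_m + ε υ_m) / 2`, where `κ_m` and `υ_m` are the unsigned and signed prefix sums, and every
prefix of the indices with `s j = ε` is of this form. A prefix of the reordered sequence is
either a prefix of the positive part, or (because the negative part is listed backwards) the
total sum minus a prefix of the negative part.
-/

namespace List

variable {α : Type*}

theorem exists_filter_take_eq_take_filter (p : α → Bool) :
    ∀ (l : List α) (k : ℕ), ∃ m ≤ l.length, (l.take m).filter p = (l.filter p).take k
  | [], _ => ⟨0, le_rfl, by simp⟩
  | _ :: _, 0 => ⟨0, by simp, by simp⟩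
  | a :: l, k + 1 => by
    by_cases hpa : p a
    · obtain ⟨m, hm, hmk⟩ := exists_filter_take_eq_take_filter p l k
      exact ⟨m + 1, by simpa using hm, by simp [hpa, hmk]⟩
    · obtain ⟨m, hm, hmk⟩ := exists_filter_take_eq_take_filter p l (k + 1)
      exact ⟨m + 1, by simpa using hm, by simp [hpa, hmk]⟩

theorem exists_sum_take_append_reverse {M : Type*} [AddCommGroup M] (P Q : List M) (k : ℕ) :
    (∃ i, ((P ++ Q.reverse).take k).sum = (P.take i).sum) ∨
      ∃ i, ((P ++ Q.reverse).take k).sum = P.sum + Q.sum - (Q.take i).sum := by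
  rcases le_or_gt k P.length with hk | hk
  · exact Or.inl ⟨k, by rw [take_append_of_le_length hk]⟩
  · refine Or.inr ⟨Q.length - (k - P.length), ?_⟩
    rw [take_append, take_of_length_le hk.le, take_reverse, sum_append, sum_reverse,
      ← sum_take_add_sum_drop Q (Q.length - (k - P.length))]
    abel

end List

section SignedPrefixSums

variable {α E : Type*} [SeminormedAddCommGroup E] [NormedSpace ℝ E] (z : α → E) {s : α → ℝ}
  {ε : ℝ}

theorem two_smul_sum_filter_sign_eq (hs : ∀ j, s j = 1 ∨ s j = -1) (hε : ε = 1 ∨ ε = -1)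
    (l : List α) :
    (2 : ℝ) • ((l.filter fun j => decide (s j = ε)).map z).sum
      = (l.map z).sum + ε • (l.map fun j => s j • z j).sum := by
  induction l with
  | nil => simp
  | cons a l ih =>
    have hεε : ε * ε = 1 := by rcases hε with rfl | rfl <;> norm_num
    by_cases ha : s a = ε
    · simp only [List.filter_cons, ha, decide_true, if_true, List.map_cons, List.sum_cons,
        smul_add, ih, smul_smul, hεε]
      module
    · have ha' : s a = -ε := by rcases hs a with h | h <;> rcases hε with rfl | rfl <;> simp_all
      rw [List.filter_cons_of_neg (by simpa using ha)]
      simp only [List.map_cons, List.sum_cons, smul_add, ih, ha', smul_smul, mul_neg, hεε]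
      module

theorem norm_sum_take_filter_sign_le (hs : ∀ j, s j = 1 ∨ s j = -1) (hε : ε = 1 ∨ ε = -1)
    {A B : ℝ} (l : List α)
    (hA : ∀ m ≤ l.length, ‖((l.take m).map fun j => s j • z j).sum‖ ≤ A)
    (hB : ∀ m ≤ l.length, ‖((l.take m).map z).sum‖ ≤ B) (k : ℕ) :
    ‖(((l.filter fun j => decide (s j = ε)).take k).map z).sum‖ ≤ (1/2) * B + (1/2) * A := by
  obtain ⟨m, hm, hmk⟩ := l.exists_filter_take_eq_take_filter _ k
  have hsum := two_smul_sum_filter_sign_eq z hs hε (l.take m)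
  rw [hmk] at hsum
  have hε_norm : ‖ε‖ = 1 := by rcases hε with rfl | rfl <;> simp
  have : 2 * ‖(((l.filter fun j => decide (s j = ε)).take k).map z).sum‖ ≤ B + A :=
    calc _ = ‖(2 : ℝ) • (((l.filter fun j => decide (s j = ε)).take k).map z).sum‖ := by
          rw [norm_smul, Real.norm_two]
      _ ≤ ‖((l.take m).map z).sum‖ + ‖ε • ((l.take m).map fun j => s j • z j).sum‖ := by
          rw [hsum]; exact norm_add_le _ _
      _ ≤ B + A := by
          rw [norm_smul, hε_norm, one_mul]; exact add_le_add (hB m hm) (hA m hm)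
  linarith

theorem sum_filter_sign_add_sum_filter_sign (hs : ∀ j, s j = 1 ∨ s j = -1) (l : List α) :
    ((l.filter fun j => decide (s j = 1)).map z).sum
      + ((l.filter fun j => decide (s j = -1)).map z).sum = (l.map z).sum := by
  have hpos := two_smul_sum_filter_sign_eq z hs (Or.inl rfl) l
  have hneg := two_smul_sum_filter_sign_eq z hs (Or.inr rfl) l
  apply smul_right_injective E (two_ne_zero (α := ℝ))
  simp only [smul_add, hpos, hneg]
  module

end SignedPrefixSums

theorem stmt18 {N d : ℕ} (z : Fin N → (Fin d → ℝ)) (s : Fin N → ℝ)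
    (hs : ∀ j, s j = 1 ∨ s j = -1) (A c₁ B : ℝ)
    (hA : ∀ k ≤ N, ‖(((List.finRange N).take k).map (fun j => s j • z j)).sum‖ ≤ A)
    (hc₁ : ‖∑ j, z j‖ ≤ c₁)
    (hB : ∀ k ≤ N, ‖(((List.finRange N).take k).map (fun j => z j)).sum‖ ≤ B) :
    ∀ k ≤ N,
      ‖(((((List.finRange N).filter (fun j => decide (s j = 1)))
          ++ (((List.finRange N).filter (fun j => decide (s j = -1))).reverse)).take k).map
          (fun j => z j)).sum‖ ≤ (1/2)*B + (1/2)*A + c₁ := by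
  intro k _
  set L := List.finRange N
  set P := L.filter fun j => decide (s j = 1)
  set Q := L.filter fun j => decide (s j = -1)
  have hlen : L.length = N := List.length_finRange
  have hA' : ∀ m ≤ L.length, _ := fun m hm => hA m (hlen ▸ hm)
  have hB' : ∀ m ≤ L.length, _ := fun m hm => hB m (hlen ▸ hm)
  have hP := norm_sum_take_filter_sign_le z hs (Or.inl rfl) L hA' hB'
  have hQ := norm_sum_take_filter_sign_le z hs (Or.inr rfl) L hA' hB'
  have htotal : (P.map z).sum + (Q.map z).sum = ∑ j, z j := by
    rw [sum_filter_sign_add_sum_filter_sign z hs L, Fin.sum_univ_def]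
  simp only [List.map_take, List.map_append, List.map_reverse]
  rcases (P.map z).exists_sum_take_append_reverse (Q.map z) k with ⟨i, h⟩ | ⟨i, h⟩
  · rw [h, ← List.map_take]
    linarith [hP i, (norm_nonneg _).trans hc₁]
  · rw [h, htotal, ← List.map_take]
    linarith [norm_sub_le (∑ j, z j) ((Q.take i).map z).sum, hQ i]
end
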